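/- arXiv:2507.07777 — 2 statements merged into one kernel-verified Lean document; each statement's English description precedes it below -/
import Mathlib

section
/- Let a ∈ 𝒜. Then a has a generalized w-weighted core-EP inverse if and only if a has a w-weighted g-Drazin inverse and there exists x ∈ 𝒜 such that a(wx)² = x, (wawx)* = wawx, and lim_{n→∞} ‖(aw)ⁿ − (aw)(xw)(aw)ⁿ‖^{1/n} = 0. In this case a^{⊛d,w} = x. -/
open Filter

/-- `y` is quasinilpotent: `‖yⁿ‖^{1/n} → 0`. -/
def IsQuasinilpotent {R : Type*} [NormedRing R] (y : R) : Prop :=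
  Filter.Tendsto (fun n : ℕ => ‖y ^ n‖ ^ (1 / (n : ℝ))) Filter.atTop (nhds 0)

/-- `y` is `w`-quasinilpotent: `‖(yw)ⁿ‖^{1/n} → 0`. -/
def IsWQuasinilpotent {R : Type*} [NormedRing R] (w y : R) : Prop :=
  Filter.Tendsto (fun n : ℕ => ‖(y * w) ^ n‖ ^ (1 / (n : ℝ))) Filter.atTop (nhds 0)

/-- `x` is a `w`-weighted core inverse of `a`. -/
def IsWCoreInv {R : Type*} [NormedRing R] [StarRing R] (w a x : R) : Prop :=
  a * (w * x) ^ 2 = x ∧ star (w * a * w * x) = w * a * w * x ∧ x * w * (a * w) ^ 2 = a * w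

/-- `x` is a generalized `w`-weighted core-EP inverse of `a`. -/
def IsWCoreEPInv {R : Type*} [NormedRing R] [StarRing R] (w a x : R) : Prop :=
  a * (w * x) ^ 2 = x ∧ star (w * a * w * x) = w * a * w * x ∧
    Filter.Tendsto (fun n : ℕ => ‖(a * w) ^ n - x * w * (a * w) ^ (n + 1)‖ ^ (1 / (n : ℝ)))
      Filter.atTop (nhds 0)

/-- `g` is a group inverse of `b`. -/
def IsGroupInv {R : Type*} [Ring R] (b g : R) : Prop :=
  b * g * b = b ∧ g * b * g = g ∧ b * g = g * b

/-- `u` is a (1,3)-inverse of `b`. -/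
def Is13Inv {R : Type*} [Ring R] [StarRing R] (b u : R) : Prop :=
  b * u * b = b ∧ star (b * u) = b * u

/-- `x` is a `(b,c)`-inverse of `a`. -/
def IsBCInv {R : Type*} [Ring R] (b c a x : R) : Prop :=
  x * a * b = b ∧ c * a * x = c ∧ (∃ s, x = b * s * x) ∧ (∃ t, x = x * t * c)

/-- `x` is a g-Drazin inverse of `b`. -/
def IsGDrazinInv {R : Type*} [NormedRing R] (b x : R) : Prop :=
  b * x = x * b ∧ x * b * x = x ∧ IsQuasinilpotent (b - b ^ 2 * x)

/-- `x` is a `w`-weighted g-Drazin inverse of `a`. -/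
def IsWGDrazinInv {R : Type*} [NormedRing R] (w a x : R) : Prop :=
  a * w * x = x * w * a ∧ x * w * a * w * x = x ∧
    IsWQuasinilpotent w (a - a * w * x * w * a)

/-- `x` is a core inverse of `a`. -/
def IsCoreInv {R : Type*} [Ring R] [StarRing R] (a x : R) : Prop :=
  a * x ^ 2 = x ∧ star (a * x) = a * x ∧ x * a ^ 2 = a

/-- `x` is a generalized core-EP inverse of `a`. -/
def IsCoreEPInv {R : Type*} [NormedRing R] [StarRing R] (a x : R) : Prop :=
  a * x ^ 2 = x ∧ star (a * x) = a * x ∧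
    Filter.Tendsto (fun n : ℕ => ‖a ^ n - x * a ^ (n + 1)‖ ^ (1 / (n : ℝ)))
      Filter.atTop (nhds 0)

/-- `x` is a pseudo core (core-EP) inverse of `a`. -/
def IsPseudoCoreInv {R : Type*} [Ring R] [StarRing R] (a x : R) : Prop :=
  a * x ^ 2 = x ∧ star (a * x) = a * x ∧ ∃ k : ℕ, 0 < k ∧ x * a ^ (k + 1) = a ^ k

/-- `u` is a `(1,3,w)`-inverse of `b`. -/
def Is13wInv {R : Type*} [Ring R] [StarRing R] (w b u : R) : Prop :=
  b = b * w * u * w * b ∧ star (w * b * w * u) = w * b * w * u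

/-!
Write `b = a w` and `y = x w`. Then `a (w x)² = x` reads `b y² = y`, whence `bⁿ yⁿ⁺¹ = y`;
the limit defining the generalized `w`-weighted core-EP inverse says that `pₙ = bⁿ - y bⁿ⁺¹`
decays faster than every geometric sequence, and the limit in the statement says the same of
`qₙ = bⁿ - b y bⁿ = (1 - b y) pₙ`.

If `e` is a g-Drazin inverse of `b`, then `pₙ = (1 - b e) bⁿ (1 - yⁿ⁺¹ bⁿ⁺¹) + e qₙ₊₁`,
and `(1 - b e) bⁿ = (b - b² e)ⁿ` decays, so `p` decays as soon as `q` does.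

Conversely, if `p` decays, the constant sequences `pₙ yⁿ⁺¹ = y - y b y` and
`pₙ₊₁ yⁿ⁺¹ = b y - y b² y` vanish. With respect to the idempotent `b y`, `b` is then upper
triangular, its corners being `b² y` (with inverse `y`) and the quasinilpotent `(1 - b y) b`.
The usual inverse of such a triangular element gives the g-Drazin inverse `e = y + y T`
of `b`, where `T = ∑ⱼ yʲ⁺¹ b (1 - b y) bʲ` is the Neumann series solution of
`T = y b - b y + y T b`; then `e² a` is a `w`-weighted g-Drazin inverse of `a`.
-/

open Asymptotics Topology

def SuperexpDecay {E : Type*} [Norm E] (u : ℕ → E) : Prop :=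
  ∀ r : ℝ, 0 < r → u =o[atTop] (r ^ ·)

section Normed

variable {E : Type*} [NormedAddCommGroup E] {u v : ℕ → E}

theorem superexpDecay_iff_tendsto :
    SuperexpDecay u ↔ Tendsto (fun n : ℕ => ‖u n‖ ^ (1 / (n : ℝ))) atTop (𝓝 0) := by
  constructor
  · intro hu
    refine tendsto_order.2 ⟨fun a ha => .of_forall fun n => ha.trans_le (by positivity),
      fun ε hε => ?_⟩
    have hε2 := half_pos hε
    filter_upwards [(hu (ε / 2) hε2).bound one_pos, eventually_ge_atTop 1] with n hn hn1
    rw [one_mul, norm_pow, Real.norm_of_nonneg hε2.le] at hn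
    calc ‖u n‖ ^ (1 / (n : ℝ)) ≤ ((ε / 2) ^ n) ^ (1 / (n : ℝ)) := by gcongr
      _ = ε / 2 := by rw [one_div, Real.pow_rpow_inv_natCast hε2.le (by omega)]
      _ < ε := half_lt_self hε
  · intro hu r hr
    have hr2 := half_pos hr
    refine IsBigO.trans_isLittleO (g := fun n => (r / 2) ^ n) (.of_bound 1 ?_)
      (isLittleO_pow_pow_of_lt_left hr2.le (half_lt_self hr))
    filter_upwards [hu.eventually (gt_mem_nhds hr2), eventually_ge_atTop 1] with n hn hn1
    rw [one_mul, norm_pow, Real.norm_of_nonneg hr2.le]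
    calc ‖u n‖ = (‖u n‖ ^ (1 / (n : ℝ))) ^ n := by
          rw [one_div, Real.rpow_inv_natCast_pow (norm_nonneg _) (by omega)]
      _ ≤ (r / 2) ^ n := by gcongr

theorem SuperexpDecay.congr' (hu : SuperexpDecay u) (h : u =ᶠ[atTop] v) : SuperexpDecay v :=
  fun r hr => (hu r hr).congr' h .rfl

theorem SuperexpDecay.add (hu : SuperexpDecay u) (hv : SuperexpDecay v) :
    SuperexpDecay (u + v) :=
  fun r hr => (hu r hr).add (hv r hr)

theorem SuperexpDecay.sub (hu : SuperexpDecay u) (hv : SuperexpDecay v) :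
    SuperexpDecay (u - v) :=
  fun r hr => (hu r hr).sub (hv r hr)

theorem SuperexpDecay.comp_add_one (hu : SuperexpDecay u) : SuperexpDecay fun n => u (n + 1) :=
  fun r hr => IsLittleO.of_const_mul_right (c := r) <| by
    simpa only [Function.comp_def, pow_succ'] using (hu r hr).comp_tendsto (tendsto_add_atTop_nat 1)

theorem SuperexpDecay.tendsto_zero (hu : SuperexpDecay u) : Tendsto u atTop (𝓝 0) :=
  (hu (1 / 2) one_half_pos).trans_tendsto
    (tendsto_pow_atTop_nhds_zero_of_lt_one one_half_pos.le one_half_lt_one)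

theorem SuperexpDecay.summable [CompleteSpace E] (hu : SuperexpDecay u) : Summable u :=
  summable_of_isBigO_nat summable_geometric_two (hu (1 / 2) one_half_pos).isBigO

end Normed

section Ring

variable {R : Type*} [NormedRing R] {u : ℕ → R}

theorem SuperexpDecay.const_mul (hu : SuperexpDecay u) (c : R) :
    SuperexpDecay fun n => c * u n :=
  fun r hr => (hu r hr).const_mul_left c

theorem SuperexpDecay.mul_const (hu : SuperexpDecay u) (c : R) :
    SuperexpDecay fun n => u n * c :=
  fun r hr => by simpa using (hu r hr).mul_isBigO (isBigO_const_const c one_ne_zero atTop)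

theorem isBigO_pow_norm_add_one_pow (x : R) : (x ^ ·) =O[atTop] ((‖x‖ + 1) ^ ·) := by
  refine .of_bound 1 ?_
  filter_upwards [eventually_norm_pow_le x] with n hn
  rw [one_mul, Real.norm_of_nonneg (by positivity)]
  exact hn.trans (pow_le_pow_left₀ (norm_nonneg x) (le_add_of_nonneg_right zero_le_one) n)

theorem SuperexpDecay.pow_mul (hu : SuperexpDecay u) (x : R) :
    SuperexpDecay fun n => x ^ n * u n := fun r hr => by
  have hM : 0 < ‖x‖ + 1 := by positivity
  simpa [← _root_.mul_pow, mul_div_cancel₀ _ hM.ne'] using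
    (isBigO_pow_norm_add_one_pow x).mul_isLittleO (hu (r / (‖x‖ + 1)) (by positivity))

theorem SuperexpDecay.mul_pow (hu : SuperexpDecay u) (x : R) :
    SuperexpDecay fun n => u n * x ^ n := fun r hr => by
  have hM : 0 < ‖x‖ + 1 := by positivity
  simpa [← _root_.mul_pow, div_mul_cancel₀ _ hM.ne'] using
    (hu (r / (‖x‖ + 1)) (by positivity)).mul_isBigO (isBigO_pow_norm_add_one_pow x)

theorem SuperexpDecay.eq_zero_of_mul_pow_eq {x z : R} (hu : SuperexpDecay u)
    (h : ∀ n, u n * x ^ n = z) : z = 0 := by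
  have hz := (hu.mul_pow x).tendsto_zero
  simp only [h] at hz
  exact tendsto_nhds_unique tendsto_const_nhds hz

end Ring

section RingIdentities

variable {R : Type*} [Ring R] {b y e : R}

theorem mul_pow_add_two_of_mul_sq (hy : b * y ^ 2 = y) (n : ℕ) :
    b * y ^ (n + 2) = y ^ (n + 1) :=
  calc b * y ^ (n + 2) = b * y ^ 2 * y ^ n := by rw [mul_assoc, ← pow_add, add_comm]
    _ = y ^ (n + 1) := by rw [hy, pow_succ']

theorem pow_mul_pow_succ_of_mul_sq (hy : b * y ^ 2 = y) : ∀ n : ℕ, b ^ n * y ^ (n + 1) = y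
  | 0 => by simp
  | n + 1 => by
    rw [pow_succ, mul_assoc, mul_pow_add_two_of_mul_sq hy, pow_mul_pow_succ_of_mul_sq hy n]

theorem one_sub_mul_mul_pow_mul_eq_zero (hy : b * y ^ 2 = y) (hyb2y : y * b ^ 2 * y = b * y) :
    ∀ n : ℕ, (1 - b * y) * b ^ n * y = 0
  | 0 => by rw [pow_zero, mul_one, sub_mul, one_mul, mul_assoc, ← sq, hy, sub_self]
  | n + 1 =>
    calc (1 - b * y) * b ^ (n + 1) * y = (1 - b * y) * b ^ n * (b * y) := by
          rw [pow_succ]; noncomm_ring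
      _ = (1 - b * y) * b ^ n * (y * b ^ 2 * y) := by rw [hyb2y]
      _ = (1 - b * y) * b ^ n * y * (b ^ 2 * y) := by noncomm_ring
      _ = 0 := by rw [one_sub_mul_mul_pow_mul_eq_zero hy hyb2y n, zero_mul]

theorem sub_sq_mul_pow_succ (hbe : b * e = e * b) (hebe : e * b * e = e) (n : ℕ) :
    (b - b ^ 2 * e) ^ (n + 1) = (1 - b * e) * b ^ (n + 1) := by
  have hidem : IsIdempotentElem (b * e) :=
    calc b * e * (b * e) = b * (e * b * e) := by noncomm_ring
      _ = b * e := by rw [hebe]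
  have hcomm : Commute (1 - b * e) b :=
    (Commute.one_left b).sub_left (by rw [Commute, SemiconjBy, mul_assoc, hbe])
  have hsplit : b - b ^ 2 * e = (1 - b * e) * b := by
    rw [sub_mul, one_mul, mul_assoc, ← hbe, ← mul_assoc, ← sq]
  rw [hsplit, hcomm.mul_pow, hidem.one_sub.pow_succ_eq]

end RingIdentities

section GDrazin

variable {A : Type*} [NormedRing A] {b y e : A}

theorem superexpDecay_one_sub_mul_mul_pow_iff (hbe : b * e = e * b) (hebe : e * b * e = e) :
    SuperexpDecay (fun n => (1 - b * e) * b ^ n) ↔ IsQuasinilpotent (b - b ^ 2 * e) := by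
  have heq : (fun n => (1 - b * e) * b ^ n) =ᶠ[atTop] ((b - b ^ 2 * e) ^ ·) := by
    filter_upwards [eventually_ge_atTop 1] with n hn
    obtain ⟨m, rfl⟩ := Nat.exists_eq_add_of_le' hn
    exact (sub_sq_mul_pow_succ hbe hebe m).symm
  rw [IsQuasinilpotent, ← superexpDecay_iff_tendsto]
  exact ⟨fun h => h.congr' heq, fun h => h.congr' heq.symm⟩

theorem IsGDrazinInv.superexpDecay (he : IsGDrazinInv b e) :
    SuperexpDecay fun n => (1 - b * e) * b ^ n :=
  (superexpDecay_one_sub_mul_mul_pow_iff he.1 he.2.1).2 he.2.2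

theorem IsWGDrazinInv.isGDrazinInv_mul {w a g : A} (hg : IsWGDrazinInv w a g) :
    IsGDrazinInv (a * w) (g * w) := by
  obtain ⟨hcomm, hgwg, hquasi⟩ := hg
  refine ⟨by simp only [← mul_assoc, hcomm], by simp only [← mul_assoc, hgwg], ?_⟩
  have hsq : (a * w) ^ 2 * (g * w) = a * w * g * w * a * w :=
    calc (a * w) ^ 2 * (g * w) = a * w * (a * w * g) * w := by noncomm_ring
      _ = a * w * (g * w * a) * w := by rw [hcomm]
      _ = a * w * g * w * a * w := by noncomm_ring
  have h : (a - a * w * g * w * a) * w = a * w - (a * w) ^ 2 * (g * w) := by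
    rw [hsq]; noncomm_ring
  rw [IsWQuasinilpotent, h] at hquasi
  exact hquasi

theorem IsGDrazinInv.isWGDrazinInv {w a : A} (he : IsGDrazinInv (a * w) e) :
    IsWGDrazinInv w a (e * e * a) := by
  obtain ⟨hcomm, hebe, hquasi⟩ := he
  have hgw : e * e * a * w = e :=
    calc e * e * a * w = e * (e * (a * w)) := by noncomm_ring
      _ = e := by rw [← hcomm, ← mul_assoc, hebe]
  have hawg : a * w * (e * e * a) = e * a :=
    calc a * w * (e * e * a) = a * w * e * e * a := by noncomm_ring
      _ = e * a := by rw [hcomm, hebe]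
  refine ⟨by rw [hawg, hgw], by rw [hgw, mul_assoc e, mul_assoc e, hawg, ← mul_assoc], ?_⟩
  have hsq : (a * w) ^ 2 * e = e * (a * w) * (a * w) :=
    calc (a * w) ^ 2 * e = a * w * (a * w * e) := by noncomm_ring
      _ = a * w * (e * (a * w)) := by rw [hcomm]
      _ = a * w * e * (a * w) := by noncomm_ring
      _ = e * (a * w) * (a * w) := by rw [hcomm]
  have h : (a - a * w * (e * e * a) * w * a) * w = a * w - (a * w) ^ 2 * e := by
    rw [hawg, hsq]; noncomm_ring
  rw [IsWQuasinilpotent, h]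
  exact hquasi

end GDrazin

section CoreEP

variable {A : Type*} [NormedRing A] {b y : A}

theorem mul_mul_self_eq_of_superexpDecay (hy : b * y ^ 2 = y)
    (hp : SuperexpDecay fun n => b ^ n - y * b ^ (n + 1)) : y * b * y = y := by
  refine (sub_eq_zero.1 <| (hp.mul_const y).eq_zero_of_mul_pow_eq (x := y) fun n => ?_).symm
  calc (b ^ n - y * b ^ (n + 1)) * y * y ^ n
      = b ^ n * y ^ (n + 1) - y * b * (b ^ n * y ^ (n + 1)) := by
        rw [pow_succ' y, pow_succ' b]; noncomm_ring
    _ = y - y * b * y := by rw [pow_mul_pow_succ_of_mul_sq hy]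

theorem mul_sq_mul_eq_of_superexpDecay (hy : b * y ^ 2 = y)
    (hp : SuperexpDecay fun n => b ^ n - y * b ^ (n + 1)) : y * b ^ 2 * y = b * y := by
  refine (sub_eq_zero.1 <|
    (hp.comp_add_one.mul_const y).eq_zero_of_mul_pow_eq (x := y) fun n => ?_).symm
  calc (b ^ (n + 1) - y * b ^ (n + 1 + 1)) * y * y ^ n
      = b * (b ^ n * y ^ (n + 1)) - y * b ^ 2 * (b ^ n * y ^ (n + 1)) := by
        rw [pow_succ' y, pow_succ' b, pow_succ' b (n + 1), pow_succ' b n, sq]; noncomm_ring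
    _ = b * y - y * b ^ 2 * y := by rw [pow_mul_pow_succ_of_mul_sq hy]

theorem superexpDecay_pow_sub_mul_mul_pow (hy : b * y ^ 2 = y)
    (hp : SuperexpDecay fun n => b ^ n - y * b ^ (n + 1)) :
    SuperexpDecay fun n => b ^ n - b * y * b ^ n := by
  refine (hp.const_mul (1 - b * y)).congr' (.of_forall fun n => ?_)
  calc (1 - b * y) * (b ^ n - y * b ^ (n + 1))
      = b ^ n - b * y * b ^ n - (y - b * y ^ 2) * b ^ (n + 1) := by noncomm_ring
    _ = b ^ n - b * y * b ^ n := by rw [hy, sub_self, zero_mul, sub_zero]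

theorem IsGDrazinInv.superexpDecay_pow_sub_mul_pow_succ {e : A} (he : IsGDrazinInv b e)
    (hy : b * y ^ 2 = y) (hq : SuperexpDecay fun n => b ^ n - b * y * b ^ n) :
    SuperexpDecay fun n => b ^ n - y * b ^ (n + 1) := by
  have hπ := he.superexpDecay
  refine ((hπ.sub ((((hπ.mul_const y).mul_pow y).mul_pow b).mul_const b)).add
    (hq.comp_add_one.const_mul e)).congr' (.of_forall fun n => ?_)
  have hbn : b ^ n * y * y ^ n = y := by
    rw [mul_assoc, ← pow_succ', pow_mul_pow_succ_of_mul_sq hy]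
  calc (1 - b * e) * b ^ n - (1 - b * e) * b ^ n * y * y ^ n * b ^ n * b
        + e * (b ^ (n + 1) - b * y * b ^ (n + 1))
      = b ^ n - b * e * b ^ n - (1 - b * e) * (b ^ n * y * y ^ n) * b ^ (n + 1)
        + e * b ^ (n + 1) - e * b * y * b ^ (n + 1) := by rw [pow_succ b n]; noncomm_ring
    _ = b ^ n - e * b ^ (n + 1) - (1 - e * b) * y * b ^ (n + 1)
        + e * b ^ (n + 1) - e * b * y * b ^ (n + 1) := by
        rw [hbn, he.1, mul_assoc e, ← pow_succ']
    _ = b ^ n - y * b ^ (n + 1) := by noncomm_ring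

theorem isGDrazinInv_add_mul {T : A} (hyby : y * b * y = y) (hT₁ : b * y * T = T)
    (hT₂ : T * b * y = 0) (hT₃ : T = y * b - b * y + y * T * b)
    (hq : SuperexpDecay fun n => (1 - b * y) * b ^ n) : IsGDrazinInv b (y + y * T) := by
  have hbe : b * (y + y * T) = b * y + T := by rw [mul_add, ← mul_assoc, hT₁]
  have hcomm : b * (y + y * T) = (y + y * T) * b := by
    rw [hbe, add_mul]
    conv_lhs => rw [hT₃]
    abel
  have hTT : T * T = 0 := by
    calc T * T = T * (b * y * T) := by rw [hT₁]
      _ = T * b * y * T := by noncomm_ring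
      _ = 0 := by rw [hT₂, zero_mul]
  have hebe : (y + y * T) * b * (y + y * T) = y + y * T :=
    calc (y + y * T) * b * (y + y * T)
        = y * b * y + y * T + y * (T * b * y) + y * (T * T) := by
          rw [mul_assoc, hbe]; noncomm_ring
      _ = y + y * T := by rw [hyby, hT₂, hTT, mul_zero, add_zero, add_zero]
  refine ⟨hcomm, hebe, (superexpDecay_one_sub_mul_mul_pow_iff hcomm hebe).1 <|
    (hq.const_mul (1 - T)).congr' (.of_forall fun n => ?_)⟩
  calc (1 - T) * ((1 - b * y) * b ^ n) = (1 - (b * y + T) + T * b * y) * b ^ n := by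
        noncomm_ring
    _ = (1 - b * (y + y * T)) * b ^ n := by rw [hT₂, add_zero, hbe]

section Complete

variable [CompleteSpace A]

theorem exists_stein_solution (hy : b * y ^ 2 = y) (hyb2y : y * b ^ 2 * y = b * y)
    (hq : SuperexpDecay fun n => (1 - b * y) * b ^ n) :
    ∃ T : A, b * y * T = T ∧ T * b * y = 0 ∧ T = y * b - b * y + y * T * b := by
  set t : ℕ → A := fun j => y ^ (j + 1) * b * ((1 - b * y) * b ^ j) with ht_def
  have ht : Summable t := by
    refine ((hq.const_mul (y * b)).pow_mul y).summable.congr fun j => ?_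
    simp only [ht_def, pow_succ, mul_assoc]
  have hbyt : ∀ j, b * y * t j = t j := fun j => by
    simp only [ht_def, ← mul_assoc, mul_assoc b y, ← pow_succ', mul_pow_add_two_of_mul_sq hy]
  have htby : ∀ j, t j * b * y = 0 := fun j =>
    calc t j * b * y = y ^ (j + 1) * b * ((1 - b * y) * b ^ (j + 1) * y) := by
          rw [ht_def, pow_succ b j]; noncomm_ring
      _ = 0 := by rw [one_sub_mul_mul_pow_mul_eq_zero hy hyb2y, mul_zero]
  have hyt : ∀ j, y * t j * b = t (j + 1) := fun j => by
    simp only [ht_def, pow_succ' y (j + 1), pow_succ b j, mul_assoc]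
  have ht0 : t 0 = y * b - b * y :=
    calc t 0 = y * b - y * b ^ 2 * y := by rw [ht_def]; noncomm_ring
      _ = y * b - b * y := by rw [hyb2y]
  refine ⟨∑' j, t j, ?_, ?_, ?_⟩
  · rw [← ht.tsum_mul_left]
    exact tsum_congr hbyt
  · rw [← ht.tsum_mul_right, ← (ht.mul_right b).tsum_mul_right]
    exact (tsum_congr htby).trans tsum_zero
  · rw [← ht.tsum_mul_left, ← (ht.mul_left y).tsum_mul_right, tsum_congr hyt, ← ht0]
    exact ht.tsum_eq_zero_add

theorem exists_isGDrazinInv_of_superexpDecay (hy : b * y ^ 2 = y)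
    (hp : SuperexpDecay fun n => b ^ n - y * b ^ (n + 1)) : ∃ e, IsGDrazinInv b e := by
  have hq : SuperexpDecay fun n => (1 - b * y) * b ^ n := by
    simpa only [sub_mul, one_mul] using superexpDecay_pow_sub_mul_mul_pow hy hp
  obtain ⟨T, hT₁, hT₂, hT₃⟩ := exists_stein_solution hy
    (mul_sq_mul_eq_of_superexpDecay hy hp) hq
  exact ⟨_, isGDrazinInv_add_mul (mul_mul_self_eq_of_superexpDecay hy hp) hT₁ hT₂ hT₃ hq⟩

end Complete

end CoreEP

section Weighted

variable {A : Type*} [NormedRing A] {w a x : A}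

theorem mul_mul_sq_of_mul_sq (hx : a * (w * x) ^ 2 = x) : a * w * (x * w) ^ 2 = x * w :=
  calc a * w * (x * w) ^ 2 = a * (w * x) ^ 2 * w := by noncomm_ring
    _ = x * w := by rw [hx]

variable [StarRing A]

theorem IsWGDrazinInv.isWCoreEPInv {g : A} (hg : IsWGDrazinInv w a g)
    (hx : a * (w * x) ^ 2 = x) (hstar : star (w * a * w * x) = w * a * w * x)
    (hq : Tendsto (fun n : ℕ => ‖(a * w) ^ n - a * w * (x * w) * (a * w) ^ n‖ ^ (1 / (n : ℝ)))
      atTop (𝓝 0)) :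
    IsWCoreEPInv w a x :=
  ⟨hx, hstar, superexpDecay_iff_tendsto.1 <|
    hg.isGDrazinInv_mul.superexpDecay_pow_sub_mul_pow_succ (mul_mul_sq_of_mul_sq hx)
      (superexpDecay_iff_tendsto.2 hq)⟩

theorem IsWCoreEPInv.tendsto_norm_pow_sub_mul_mul_pow (hx : IsWCoreEPInv w a x) :
    Tendsto (fun n : ℕ => ‖(a * w) ^ n - a * w * (x * w) * (a * w) ^ n‖ ^ (1 / (n : ℝ)))
      atTop (𝓝 0) :=
  superexpDecay_iff_tendsto.1 <| superexpDecay_pow_sub_mul_mul_pow (mul_mul_sq_of_mul_sq hx.1)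
    (superexpDecay_iff_tendsto.2 hx.2.2)

theorem IsWCoreEPInv.exists_isWGDrazinInv [CompleteSpace A] (hx : IsWCoreEPInv w a x) :
    ∃ g, IsWGDrazinInv w a g :=
  let ⟨_, he⟩ := exists_isGDrazinInv_of_superexpDecay (mul_mul_sq_of_mul_sq hx.1)
    (superexpDecay_iff_tendsto.2 hx.2.2)
  ⟨_, he.isWGDrazinInv⟩

end Weighted

variable {A : Type*} [NormedRing A] [NormedAlgebra ℂ A] [StarRing A] [StarModule ℂ A]
  [CompleteSpace A]

/-- Lemma 4.1. -/
theorem isWCoreEPInv_exists_iff_aux (w a : A) :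
    ((∃ x, IsWCoreEPInv w a x) ↔
      (∃ g, IsWGDrazinInv w a g) ∧
      ∃ x : A, a * (w * x) ^ 2 = x ∧ star (w * a * w * x) = w * a * w * x ∧
        Filter.Tendsto
          (fun n : ℕ => ‖(a * w) ^ n - a * w * (x * w) * (a * w) ^ n‖ ^ (1 / (n : ℝ)))
          Filter.atTop (nhds 0)) ∧
    (∀ x : A, (∃ g, IsWGDrazinInv w a g) →
      (a * (w * x) ^ 2 = x ∧ star (w * a * w * x) = w * a * w * x ∧
        Filter.Tendsto
          (fun n : ℕ => ‖(a * w) ^ n - a * w * (x * w) * (a * w) ^ n‖ ^ (1 / (n : ℝ)))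
          Filter.atTop (nhds 0)) →
      IsWCoreEPInv w a x) :=
  ⟨⟨fun ⟨x, hx⟩ =>
      ⟨hx.exists_isWGDrazinInv, x, hx.1, hx.2.1, hx.tendsto_norm_pow_sub_mul_mul_pow⟩,
    fun ⟨⟨_, hg⟩, x, hx, hstar, hq⟩ => ⟨x, hg.isWCoreEPInv hx hstar hq⟩⟩,
    fun _ ⟨_, hg⟩ ⟨hx, hstar, hq⟩ => hg.isWCoreEPInv hx hstar hq⟩
end

section
/- Let a ∈ 𝒜 have a generalized w-weighted core-EP inverse a^{⊛d,w}, let e ∈ 𝒜 be a g-Drazin inverse of wa, and let b ∈ 𝒜. The following are equivalent: (1) (1 − wawa^{⊛d,w})b = 0; (2) (1 − wa^{⊛d,w}wa)b = 0; (3) (1 − (wa)e)b = 0. -/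
open Filter

variable {A : Type*} [NormedRing A] [NormedAlgebra ℂ A] [StarRing A] [StarModule ℂ A]
  [CompleteSpace A]

/-! Write `s = wa`, `y = wx` and `r = se`; the three conditions are `(1 - p) b = 0` for
`p = sy, ys, r`, and two elements with `pq = q`, `qp = p` give equivalent conditions. The
relation `sy · ys = ys` is algebra from `s y² = y`. Each of `ys · sy = sy`, `ys · r = r` and
`r · ys = ys` says that a fixed difference `d` vanishes, and `d` factors for every `n` as a
superexponentially small term times an `n`-th power, e.g.
`sy - ys · sy = (sⁿ⁺¹ - y sⁿ⁺²) yⁿ⁺¹` and `ys - r · ys = (s - s² e)ⁿ⁺¹ yⁿ⁺¹ (ys)`. -/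

open Topology

lemma tendsto_pow_self_of_tendsto_zero {f : ℕ → ℝ} (hf : Tendsto f atTop (𝓝 0)) :
    Tendsto (fun n => f n ^ n) atTop (𝓝 0) := by
  have hsmall : ∀ᶠ n in atTop, ‖f n‖ ≤ 1 / 2 :=
    (tendsto_zero_iff_norm_tendsto_zero.mp hf).eventually (ge_mem_nhds (by norm_num))
  refine squeeze_zero_norm' ?_ (tendsto_pow_atTop_nhds_zero_of_lt_one (r := (1 / 2 : ℝ))
    (by norm_num) (by norm_num))
  filter_upwards [hsmall] with n hn
  rw [norm_pow]
  exact pow_le_pow_left₀ (norm_nonneg _) hn n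

lemma tendsto_mul_pow_of_tendsto_rpow_inv {v : ℕ → ℝ} (hv0 : ∀ n, 0 ≤ v n)
    (hv : Tendsto (fun n : ℕ => v n ^ (1 / (n : ℝ))) atTop (𝓝 0)) (c : ℝ) :
    Tendsto (fun n => v n * c ^ n) atTop (𝓝 0) := by
  refine (tendsto_pow_self_of_tendsto_zero (by simpa using hv.mul_const c)).congr' ?_
  filter_upwards [eventually_ne_atTop 0] with n hn
  rw [mul_pow, Real.rpow_inv_natCast_pow (hv0 n) hn]

lemma tendsto_mul_pow_of_abs_le {t v : ℕ → ℝ} (hv0 : ∀ n, 0 ≤ v n)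
    (hv : Tendsto (fun n : ℕ => v n ^ (1 / (n : ℝ))) atTop (𝓝 0)) {C : ℝ}
    (htv : ∀ n, |t n| ≤ C * v n) (c : ℝ) :
    Tendsto (fun n => t n * c ^ n) atTop (𝓝 0) := by
  refine squeeze_zero_norm (fun n => ?_)
    (by simpa using (tendsto_mul_pow_of_tendsto_rpow_inv hv0 hv |c|).const_mul C)
  rw [norm_mul, norm_pow, Real.norm_eq_abs, Real.norm_eq_abs, ← mul_assoc]
  exact mul_le_mul_of_nonneg_right (htv n) (by positivity)

lemma eq_zero_of_norm_le_of_tendsto {E : Type*} [NormedAddGroup E] {d : E} {f : ℕ → ℝ}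
    (hf : Tendsto f atTop (𝓝 0)) (hd : ∀ n, ‖d‖ ≤ f n) : d = 0 :=
  norm_le_zero_iff.mp (ge_of_tendsto' hf hd)

section Ring

variable {R : Type*} [Ring R]

lemma one_sub_mul_eq_zero_iff_of_mul_eq {p q : R} (hpq : p * q = q) (hqp : q * p = p) (b : R) :
    (1 - p) * b = 0 ↔ (1 - q) * b = 0 := by
  simp only [sub_mul, one_mul, sub_eq_zero]
  constructor
  · intro h
    rw [h, ← mul_assoc, hqp, ← h]
  · intro h
    rw [h, ← mul_assoc, hpq, ← h]

lemma pow_mul_pow_succ_of_mul_mul_self {s y : R} (hy : s * (y * y) = y) (n : ℕ) :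
    s ^ n * y ^ (n + 1) = y := by
  induction n with
  | zero => simp
  | succ n ih => rw [pow_succ', pow_succ, mul_assoc s, ← mul_assoc (s ^ n), ih, hy]

lemma mul_mul_pow_mul_eq_pow_succ (w a : R) (n : ℕ) : w * (a * w) ^ n * a = (w * a) ^ (n + 1) := by
  rw [← mul_pow_mul, mul_assoc, ← pow_succ]

lemma pow_succ_sub_mul_pow_eq_mul_mul (w a x : R) (n : ℕ) :
    (w * a) ^ (n + 1) - w * x * (w * a) ^ (n + 2) =
      w * ((a * w) ^ n - x * w * (a * w) ^ (n + 1)) * a := by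
  rw [mul_sub, sub_mul, mul_mul_pow_mul_eq_pow_succ, ← mul_mul_pow_mul_eq_pow_succ w a (n + 1)]
  simp only [mul_assoc]

variable {s e : R}

lemma isIdempotentElem_mul_of_mul_mul_eq (hese : e * s * e = e) : IsIdempotentElem (s * e) := by
  rw [IsIdempotentElem, mul_assoc, ← mul_assoc e, hese]

lemma pow_succ_mul_pow_succ_of_mul_mul_eq (hse : Commute s e) (hese : e * s * e = e) (n : ℕ) :
    s ^ (n + 1) * e ^ (n + 1) = s * e := by
  rw [← hse.mul_pow, (isIdempotentElem_mul_of_mul_mul_eq hese).pow_succ_eq]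

lemma sub_sq_mul_pow_succ_of_mul_mul_eq (hse : Commute s e) (hese : e * s * e = e) (n : ℕ) :
    (s - s ^ 2 * e) ^ (n + 1) = (1 - s * e) * s ^ (n + 1) := by
  have hcomm : Commute (1 - s * e) s :=
    (Commute.one_left s).sub_left ((Commute.refl s).mul_left hse.symm)
  have hfactor : s - s ^ 2 * e = (1 - s * e) * s := by
    rw [sub_mul, one_mul, mul_assoc, ← hse.eq, ← mul_assoc, sq]
  rw [hfactor, hcomm.mul_pow, (isIdempotentElem_mul_of_mul_mul_eq hese).one_sub.pow_succ_eq]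

end Ring

section NormedRing

variable {R : Type*} [NormedRing R] {s y : R}

lemma norm_mul_pow_succ_le (u v : R) (n : ℕ) : ‖u * v ^ (n + 1)‖ ≤ ‖v‖ * (‖u‖ * ‖v‖ ^ n) :=
  calc ‖u * v ^ (n + 1)‖ ≤ ‖u‖ * ‖v‖ ^ (n + 1) :=
        (norm_mul_le _ _).trans (by gcongr; exact norm_pow_le' v n.succ_pos)
    _ = ‖v‖ * (‖u‖ * ‖v‖ ^ n) := by ring

lemma mul_mul_mul_eq_of_tendsto (hy : s * (y * y) = y)
    (hT : ∀ c : ℝ, Tendsto (fun n => ‖s ^ (n + 1) - y * s ^ (n + 2)‖ * c ^ n) atTop (𝓝 0)) :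
    y * s * (s * y) = s * y := by
  refine (sub_eq_zero.mp (eq_zero_of_norm_le_of_tendsto
    (by simpa using (hT ‖y‖).const_mul ‖y‖) fun n => ?_)).symm
  have hid : s * y - y * s * (s * y) = (s ^ (n + 1) - y * s ^ (n + 2)) * y ^ (n + 1) := by
    rw [sub_mul, pow_succ' s n, pow_succ' s (n + 1), pow_succ' s n]
    simp only [mul_assoc, pow_mul_pow_succ_of_mul_mul_self hy]
  rw [hid]
  exact norm_mul_pow_succ_le _ _ n

lemma mul_mul_mul_eq_of_tendsto_of_commute {e : R}
    (hT : ∀ c : ℝ, Tendsto (fun n => ‖s ^ (n + 1) - y * s ^ (n + 2)‖ * c ^ n) atTop (𝓝 0))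
    (hse : Commute s e) (hese : e * s * e = e) :
    y * s * (s * e) = s * e := by
  refine (sub_eq_zero.mp (eq_zero_of_norm_le_of_tendsto
    (by simpa using (hT ‖e‖).const_mul ‖e‖) fun n => ?_)).symm
  have hid : s * e - y * s * (s * e) = (s ^ (n + 1) - y * s ^ (n + 2)) * e ^ (n + 1) := by
    rw [sub_mul, pow_succ' s (n + 1)]
    simp only [mul_assoc, pow_succ_mul_pow_succ_of_mul_mul_eq hse hese]
  rw [hid]
  exact norm_mul_pow_succ_le _ _ n

lemma mul_mul_mul_eq_of_isQuasinilpotent {e : R} (hy : s * (y * y) = y) (hse : Commute s e)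
    (hese : e * s * e = e) (hq : IsQuasinilpotent (s - s ^ 2 * e)) :
    s * e * (y * s) = y * s := by
  have hlim : Tendsto (fun n => ‖y * s‖ * (‖(s - s ^ 2 * e) ^ (n + 1)‖ * ‖y‖ ^ (n + 1)))
      atTop (𝓝 0) := by
    simpa using ((tendsto_add_atTop_iff_nat 1).mpr
      (tendsto_mul_pow_of_tendsto_rpow_inv (fun n => norm_nonneg _) hq ‖y‖)).const_mul ‖y * s‖
  refine (sub_eq_zero.mp (eq_zero_of_norm_le_of_tendsto hlim fun n => ?_)).symm
  have hid : y * s - s * e * (y * s) = (s - s ^ 2 * e) ^ (n + 1) * y ^ (n + 1) * (y * s) := by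
    rw [sub_sq_mul_pow_succ_of_mul_mul_eq hse hese, ← one_sub_mul]
    simp only [mul_assoc]
    rw [← mul_assoc (y ^ (n + 1)) y, ← pow_succ, ← mul_assoc (s ^ (n + 1)),
      pow_mul_pow_succ_of_mul_mul_self hy]
  rw [hid]
  calc ‖(s - s ^ 2 * e) ^ (n + 1) * y ^ (n + 1) * (y * s)‖
      ≤ ‖(s - s ^ 2 * e) ^ (n + 1)‖ * ‖y‖ ^ (n + 1) * ‖y * s‖ := by
        refine (norm_mul_le _ _).trans (mul_le_mul_of_nonneg_right ?_ (norm_nonneg _))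
        exact (norm_mul_le _ _).trans (by gcongr; exact norm_pow_le' y n.succ_pos)
    _ = ‖y * s‖ * (‖(s - s ^ 2 * e) ^ (n + 1)‖ * ‖y‖ ^ (n + 1)) := by ring

lemma tendsto_norm_pow_succ_sub_mul_pow_mul_pow {w a x : R}
    (hx : Tendsto (fun n : ℕ => ‖(a * w) ^ n - x * w * (a * w) ^ (n + 1)‖ ^ (1 / (n : ℝ)))
      atTop (𝓝 0)) (c : ℝ) :
    Tendsto (fun n => ‖(w * a) ^ (n + 1) - w * x * (w * a) ^ (n + 2)‖ * c ^ n) atTop (𝓝 0) := by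
  refine tendsto_mul_pow_of_abs_le (fun n => norm_nonneg _) hx (C := ‖w‖ * ‖a‖) (fun n => ?_) c
  rw [abs_norm, pow_succ_sub_mul_pow_eq_mul_mul]
  calc ‖w * ((a * w) ^ n - x * w * (a * w) ^ (n + 1)) * a‖
      ≤ ‖w‖ * ‖(a * w) ^ n - x * w * (a * w) ^ (n + 1)‖ * ‖a‖ := norm_mul₃_le
    _ = ‖w‖ * ‖a‖ * ‖(a * w) ^ n - x * w * (a * w) ^ (n + 1)‖ := by ring

end NormedRing

/-- Lemma 4.6. -/
theorem annihilator_equiv (w a x e b : A)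
    (hx : IsWCoreEPInv w a x) (he : IsGDrazinInv (w * a) e) :
    ((1 - w * a * w * x) * b = 0 ↔ (1 - w * x * w * a) * b = 0) ∧
    ((1 - w * x * w * a) * b = 0 ↔ (1 - w * a * e) * b = 0) := by
  obtain ⟨hx₁, -, hx₃⟩ := hx
  obtain ⟨hse, hese, hq⟩ := he
  have hy : w * a * (w * x * (w * x)) = w * x := by
    simpa only [sq, mul_assoc] using congrArg (w * ·) hx₁
  have hT := tendsto_norm_pow_succ_sub_mul_pow_mul_pow hx₃
  have hpq : w * a * (w * x) * (w * x * (w * a)) = w * x * (w * a) := by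
    rw [mul_assoc, ← mul_assoc (w * x), ← mul_assoc, hy]
  have hqp := mul_mul_mul_eq_of_tendsto hy hT
  have hqr := mul_mul_mul_eq_of_tendsto_of_commute hT hse hese
  have hrq := mul_mul_mul_eq_of_isQuasinilpotent hy hse hese hq
  simpa only [mul_assoc] using
    And.intro (one_sub_mul_eq_zero_iff_of_mul_eq hpq hqp b)
      (one_sub_mul_eq_zero_iff_of_mul_eq hqr hrq b)
end
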